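/- arXiv:1605.03612 — 6 statements merged into one kernel-verified Lean document; each statement's English description precedes it below -/
import Mathlib

section
/- Let p, n, m be integers with n ≥ m ≥ 0 and p ≥ n + 2m + 2. Let (B, R) be a partition of the edge set of the complete graph K_p into two color classes such that neither class contains a copy of the double star S(n,m). Then for every vertex v of K_p and each color class C ∈ {B, R}, the number of edges of C incident to v is at most n + m. -/
/-
A vertex of `C`-degree at least `n + m + 1` can serve as the `n`-centre of a double star, so all
its `C`-neighbours have `C`-degree at most `m`; since `p ≥ n + 2m + 2`, they have degree at least
`n + m + 1` in the other colour. Suppose `deg_G v ≥ n + m + 1` and let `u` be a `G`-neighbour of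
`v`. Then `u` is large in `Gᶜ`, so every `Gᶜ`-neighbour of `u` is large in `G`. Two large vertices
of the same colour are never adjacent in it, so the `Gᶜ`-neighbourhood of `u` is a `Gᶜ`-clique,
and any of its vertices `x` has `deg_Gᶜ x ≥ deg_Gᶜ u`: then `u` and `x` are adjacent and both
large in `Gᶜ`, a contradiction.
-/

open SimpleGraph Set

/-- `G` contains a copy of the double star `S(n,m)`. -/
def HasDoubleStar {V : Type*} (G : SimpleGraph V) (n m : ℕ) : Prop :=
  ∃ (u v : V) (A B : Finset V), G.Adj u v ∧
    ↑A ⊆ G.neighborSet u ∧ ↑B ⊆ G.neighborSet v ∧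
    v ∉ A ∧ u ∉ B ∧ Disjoint A B ∧ A.card = n ∧ B.card = m

/-- Ramsey number of the double star `S(n,m)`. -/
noncomputable def doubleStarRamsey (n m : ℕ) : ℕ :=
  sInf {N : ℕ | ∀ G : SimpleGraph (Fin N), HasDoubleStar G n m ∨ HasDoubleStar Gᶜ n m}

/-- `G` is a `(δ,η)`-graph. -/
def IsDEGraph {V : Type*} [Fintype V] (δ η : ℝ) (G : SimpleGraph V) : Prop :=
  1 < Fintype.card V ∧
  (∀ v : V, ((G.neighborSet v).ncard : ℝ) + 1 ≥ δ * Fintype.card V) ∧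
  (∀ u v : V, G.Adj u v →
    ((G.neighborSet u ∪ G.neighborSet v).ncard : ℝ) ≤ (1 - η) * Fintype.card V)

namespace SimpleGraph

variable {V : Type*} [Fintype V] (G : SimpleGraph V) [DecidableRel G.Adj]

theorem ncard_neighborSet_eq_degree (v : V) : (G.neighborSet v).ncard = G.degree v := by
  rw [Set.ncard_eq_toFinset_card', ← neighborFinset_def, card_neighborFinset_eq_degree]

variable [DecidableEq V]

theorem degree_add_degree_compl (v : V) : G.degree v + Gᶜ.degree v = Fintype.card V - 1 := by
  have := G.degree_lt_card_verts v
  rw [degree_compl]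
  omega

theorem degree_le_degree_of_forall_adj {u x : V} (hux : G.Adj u x)
    (h : ∀ y, G.Adj u y → y ≠ x → G.Adj x y) : G.degree u ≤ G.degree x := by
  have hsub : insert u ((G.neighborFinset u).erase x) ⊆ G.neighborFinset x := by
    intro y hy
    rcases Finset.mem_insert.mp hy with rfl | hy
    · simpa using hux.symm
    · obtain ⟨hyx, huy⟩ := Finset.mem_erase.mp hy
      simpa using h y (by simpa using huy) hyx
  have hu : u ∉ (G.neighborFinset u).erase x := by simp
  have := Finset.card_le_card hsub
  rw [Finset.card_insert_of_notMem hu, Finset.card_erase_of_mem (by simpa using hux)] at this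
  simp only [card_neighborFinset_eq_degree] at this
  omega

variable {G} {n m : ℕ}

theorem degree_le_of_adj_of_not_hasDoubleStar (hG : ¬ HasDoubleStar G n m) {u v : V}
    (huv : G.Adj u v) (hu : n + m + 1 ≤ G.degree u) : G.degree v ≤ m := by
  by_contra! hv
  obtain ⟨B, hB, hBcard⟩ : ∃ B ⊆ (G.neighborFinset v).erase u, B.card = m :=
    Finset.exists_subset_card_eq <| by
      rw [Finset.card_erase_of_mem (by simpa using huv.symm), card_neighborFinset_eq_degree]
      omega
  obtain ⟨A, hA, hAcard⟩ : ∃ A ⊆ G.neighborFinset u \ insert v B, A.card = n :=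
    Finset.exists_subset_card_eq <| by
      have := Finset.le_card_sdiff (insert v B) (G.neighborFinset u)
      have := Finset.card_insert_le v B
      rw [card_neighborFinset_eq_degree] at *
      omega
  refine hG ⟨u, v, A, B, huv, fun x hx => ?_, fun x hx => ?_, fun hvA => ?_, fun huB => ?_,
    Finset.disjoint_left.mpr fun x hxA hxB => ?_, hAcard, hBcard⟩
  · simpa using (Finset.mem_sdiff.mp (hA hx)).1
  · simpa using Finset.mem_of_mem_erase (hB hx)
  · simpa using hA hvA
  · simpa using hB huB
  · simpa [hxB] using hA hxA

theorem not_adj_of_not_hasDoubleStar (hG : ¬ HasDoubleStar G n m) {u v : V}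
    (hu : n + m + 1 ≤ G.degree u) (hv : n + m + 1 ≤ G.degree v) : ¬ G.Adj u v := fun huv => by
  have := degree_le_of_adj_of_not_hasDoubleStar hG huv hu
  omega

theorem degree_le_of_not_hasDoubleStar (hV : n + 2 * m + 2 ≤ Fintype.card V)
    (hG : ¬ HasDoubleStar G n m) (hGc : ¬ HasDoubleStar Gᶜ n m) (v : V) :
    G.degree v ≤ n + m := by
  by_contra! hv
  obtain ⟨u, hvu⟩ := (G.degree_pos_iff_exists_adj v).mp (by omega)
  have hu : n + m + 1 ≤ Gᶜ.degree u := by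
    have := degree_le_of_adj_of_not_hasDoubleStar hG hvu hv
    have := G.degree_add_degree_compl u
    omega
  have hbig : ∀ x, Gᶜ.Adj u x → n + m + 1 ≤ G.degree x := fun x hux => by
    have := degree_le_of_adj_of_not_hasDoubleStar hGc hux hu
    have := G.degree_add_degree_compl x
    omega
  obtain ⟨x, hux⟩ := (Gᶜ.degree_pos_iff_exists_adj u).mp (by omega)
  have hx : Gᶜ.degree u ≤ Gᶜ.degree x :=
    Gᶜ.degree_le_degree_of_forall_adj hux fun y huy hyx =>
      (compl_adj G x y).mpr ⟨hyx.symm, not_adj_of_not_hasDoubleStar hG (hbig x hux) (hbig y huy)⟩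
  exact not_adj_of_not_hasDoubleStar hGc hu (by omega) hux

end SimpleGraph

theorem grossman_degree_bound_general (p n m : ℕ) (hp : n + 2*m + 2 ≤ p)
    (G : SimpleGraph (Fin p))
    (hfree : ¬ HasDoubleStar G n m ∧ ¬ HasDoubleStar Gᶜ n m) :
    ∀ v : Fin p, ∀ C ∈ ({G, Gᶜ} : Set (SimpleGraph (Fin p))),
      (C.neighborSet v).ncard ≤ n + m := by
  classical
  have hV : n + 2 * m + 2 ≤ Fintype.card (Fin p) := by simpa using hp
  rintro v C (rfl | rfl)
  · rw [ncard_neighborSet_eq_degree]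
    exact degree_le_of_not_hasDoubleStar hV hfree.1 hfree.2 v
  · rw [ncard_neighborSet_eq_degree]
    exact degree_le_of_not_hasDoubleStar hV hfree.2 (by simpa using hfree.1) v

theorem grossman_degree_bound (p n m : ℕ) (hnm : m ≤ n) (hp : n + 2*m + 2 ≤ p)
    (G : SimpleGraph (Fin p))
    (hfree : ¬ HasDoubleStar G n m ∧ ¬ HasDoubleStar Gᶜ n m) :
    ∀ v : Fin p, ∀ C ∈ ({G, Gᶜ} : Set (SimpleGraph (Fin p))),
      (C.neighborSet v).ncard ≤ n + m :=
  grossman_degree_bound_general p n m hp G hfree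
end

section
/- Let G be a graph on n vertices in which every vertex has degree strictly greater than n/2. Then there exists an edge uv of G with |N(u) ∪ N(v)| > 2n/3. -/
open SimpleGraph Set

theorem exists_edge_big_union {V : Type*} [Fintype V] [Nonempty V] (G : SimpleGraph V)
    (hdeg : ∀ v : V, (Fintype.card V : ℝ) / 2 < ((G.neighborSet v).ncard : ℝ)) :
    ∃ u v : V, G.Adj u v ∧
      (2 * (Fintype.card V : ℝ)) / 3 < ((G.neighborSet u ∪ G.neighborSet v).ncard : ℝ) := by
  classical
  by_contra hcon
  push_neg at hcon
  set n := Fintype.card V with hn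
  have hnpos : (0:ℝ) < (n:ℝ) := by exact_mod_cast Fintype.card_pos
  set NF : V → Finset V := fun v => (G.neighborSet v).toFinset with hNF
  have hmemNF : ∀ v w : V, w ∈ NF v ↔ G.Adj v w := by
    intro v w
    simp [hNF, Set.mem_toFinset]
  have hdegF : ∀ v : V, (n:ℝ)/2 < ((NF v).card : ℝ) := by
    intro v
    have h := hdeg v
    rwa [Set.ncard_eq_toFinset_card'] at h
  have hUF : ∀ u v : V, G.Adj u v → (((NF u ∪ NF v).card : ℝ)) ≤ 2*(n:ℝ)/3 := by
    intro u v huv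
    have h := hcon u v huv
    rw [Set.ncard_eq_toFinset_card', Set.toFinset_union] at h
    calc (((NF u ∪ NF v).card : ℝ)) = (((G.neighborSet u).toFinset ∪ (G.neighborSet v).toFinset).card : ℝ) := by rw [hNF]
    _ ≤ 2*(n:ℝ)/3 := by linarith [h]
  have hcard_le : ∀ s : Finset V, ((s.card : ℝ)) ≤ n := by
    intro s
    exact_mod_cast Finset.card_le_univ s
  obtain ⟨x₀⟩ := ‹Nonempty V›
  set A : Finset V := NF x₀ with hA
  set M : Finset V := Finset.univ \ insert x₀ A with hM
  have hx₀A : x₀ ∉ A := by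
    rw [hA]
    intro h
    exact G.irrefl ((hmemNF x₀ x₀).1 h)
  have hx₀M : x₀ ∉ M := by simp [hM]
  have hdisjAM : Disjoint A M := by
    rw [Finset.disjoint_left]
    intro a ha hm
    rw [hM, Finset.mem_sdiff] at hm
    exact hm.2 (Finset.mem_insert_of_mem ha)
  have hAins : (insert x₀ A).card = A.card + 1 := Finset.card_insert_of_notMem hx₀A
  have hle : A.card + 1 ≤ n := by
    rw [← hAins]
    exact Finset.card_le_univ _
  have hMcardN : M.card = n - (A.card + 1) := by
    rw [hM, Finset.card_sdiff_of_subset (Finset.subset_univ _), Finset.card_univ, hAins]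
  have hMcardR : (M.card : ℝ) = (n:ℝ) - (A.card + 1) := by
    rw [hMcardN, Nat.cast_sub hle]
    push_cast
    ring
  -- Step 1+2 : upper bound on neighbors in M, for a ∈ A
  have step12 : ∀ a ∈ A, ((M ∩ NF a).card : ℝ) ≤ 2*(n:ℝ)/3 - A.card - 1 := by
    intro a ha
    have hadj : G.Adj x₀ a := (hmemNF x₀ a).1 (by rwa [← hA])
    have hinter : ((A ∩ NF a).card : ℝ) ≥ (A.card : ℝ) + (NF a).card - 2*(n:ℝ)/3 := by
      have hcui : (A ∪ NF a).card + (A ∩ NF a).card = A.card + (NF a).card :=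
        Finset.card_union_add_card_inter _ _
      have hu : ((A ∪ NF a).card : ℝ) ≤ 2*(n:ℝ)/3 := by
        rw [hA]; exact hUF x₀ a hadj
      have hc : ((A ∪ NF a).card : ℝ) + (A ∩ NF a).card = (A.card : ℝ) + (NF a).card := by
        exact_mod_cast congrArg (fun k : ℕ => (k:ℝ)) hcui
      linarith
    have c1 : Disjoint (A ∩ NF a) (M ∩ NF a) :=
      Finset.disjoint_of_subset_left (Finset.inter_subset_left)
        (Finset.disjoint_of_subset_right (Finset.inter_subset_left) hdisjAM)
    have c2 : Disjoint ((A ∩ NF a) ∪ (M ∩ NF a)) {x₀} := by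
      simp only [Finset.disjoint_singleton_right, Finset.mem_union, Finset.mem_inter]
      rintro (⟨h1, _⟩ | ⟨h1, _⟩)
      · exact hx₀A h1
      · exact hx₀M h1
    have hsub : ((A ∩ NF a) ∪ (M ∩ NF a)) ∪ {x₀} ⊆ NF a := by
      intro z hz
      rcases Finset.mem_union.1 hz with hz | hz
      · rcases Finset.mem_union.1 hz with hz | hz
        · exact (Finset.mem_inter.1 hz).2
        · exact (Finset.mem_inter.1 hz).2
      · rw [Finset.mem_singleton] at hz
        rw [hz]
        exact (hmemNF a x₀).2 hadj.symm
    have hcards : (A ∩ NF a).card + (M ∩ NF a).card + 1 ≤ (NF a).card := by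
      have := Finset.card_le_card hsub
      rwa [Finset.card_union_of_disjoint c2, Finset.card_union_of_disjoint c1,
        Finset.card_singleton] at this
    have hcardsR : ((A ∩ NF a).card : ℝ) + (M ∩ NF a).card + 1 ≤ ((NF a).card : ℝ) := by
      exact_mod_cast hcards
    linarith
  -- Step 3 : lower bound on neighbors in A, for y ∈ M
  have step3 : ∀ y ∈ M, (A.card : ℝ) - (n:ℝ)/3 < ((A ∩ NF y).card : ℝ) := by
    intro y hy
    have hne : (NF x₀ ∩ NF y).Nonempty := by
      rw [Finset.nonempty_iff_ne_empty]
      intro hemp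
      have h0 : (NF x₀ ∩ NF y).card = 0 := by rw [hemp]; rfl
      have hcui : (NF x₀ ∪ NF y).card + (NF x₀ ∩ NF y).card = (NF x₀).card + (NF y).card :=
        Finset.card_union_add_card_inter _ _
      rw [h0] at hcui
      have hR : ((NF x₀ ∪ NF y).card : ℝ) = ((NF x₀).card : ℝ) + (NF y).card := by
        exact_mod_cast congrArg (fun k : ℕ => (k:ℝ)) hcui
      have := hcard_le (NF x₀ ∪ NF y)
      linarith [hdegF x₀, hdegF y]
    obtain ⟨w, hw⟩ := hne
    have hwx : G.Adj x₀ w := (hmemNF _ _).1 (Finset.mem_inter.1 hw).1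
    have hwy : G.Adj y w := (hmemNF _ _).1 (Finset.mem_inter.1 hw).2
    have b1 : ((A \ NF w).card : ℝ) ≤ 2*(n:ℝ)/3 - (NF w).card := by
      have he : (A \ NF w).card + (NF w).card = (A ∪ NF w).card :=
        Finset.card_sdiff_add_card A (NF w)
      have heR : ((A \ NF w).card : ℝ) + (NF w).card = ((A ∪ NF w).card : ℝ) := by
        exact_mod_cast congrArg (fun k : ℕ => (k:ℝ)) he
      have hu : ((A ∪ NF w).card : ℝ) ≤ 2*(n:ℝ)/3 := by
        rw [hA]; exact hUF x₀ w hwx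
      linarith
    have b2 : ((NF w \ NF y).card : ℝ) ≤ 2*(n:ℝ)/3 - (NF y).card := by
      have he : (NF w \ NF y).card + (NF y).card = (NF w ∪ NF y).card :=
        Finset.card_sdiff_add_card (NF w) (NF y)
      have heR : ((NF w \ NF y).card : ℝ) + (NF y).card = ((NF w ∪ NF y).card : ℝ) := by
        exact_mod_cast congrArg (fun k : ℕ => (k:ℝ)) he
      have hu : ((NF w ∪ NF y).card : ℝ) ≤ 2*(n:ℝ)/3 := hUF w y hwy.symm
      linarith
    have b3 : A \ NF y ⊆ (A \ NF w) ∪ (NF w \ NF y) := by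
      intro z hz
      rw [Finset.mem_sdiff] at hz
      rw [Finset.mem_union, Finset.mem_sdiff, Finset.mem_sdiff]
      by_cases hzw : z ∈ NF w
      · exact Or.inr ⟨hzw, hz.2⟩
      · exact Or.inl ⟨hz.1, hzw⟩
    have b4 : ((A \ NF y).card : ℝ) ≤ ((A \ NF w).card : ℝ) + ((NF w \ NF y).card : ℝ) := by
      have h1 : (A \ NF y).card ≤ ((A \ NF w) ∪ (NF w \ NF y)).card := Finset.card_le_card b3
      have h2 : ((A \ NF w) ∪ (NF w \ NF y)).card ≤ (A \ NF w).card + (NF w \ NF y).card :=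
        Finset.card_union_le _ _
      exact_mod_cast le_trans h1 h2
    have b5 : (A ∩ NF y).card + (A \ NF y).card = A.card :=
      Finset.card_inter_add_card_sdiff A (NF y)
    have b5R : ((A ∩ NF y).card : ℝ) + ((A \ NF y).card : ℝ) = (A.card : ℝ) := by
      exact_mod_cast congrArg (fun k : ℕ => (k:ℝ)) b5
    linarith [hdegF w, hdegF y]
  -- Sum swap
  have hswap : ∑ a ∈ A, (M ∩ NF a).card = ∑ y ∈ M, (A ∩ NF y).card := by
    have e1 : ∀ a : V, M ∩ NF a = M.filter (fun y => G.Adj a y) := by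
      intro a
      ext y
      simp only [Finset.mem_inter, Finset.mem_filter, hmemNF]
    have e2 : ∀ y : V, A ∩ NF y = A.filter (fun a => G.Adj a y) := by
      intro y
      ext a
      simp only [Finset.mem_inter, Finset.mem_filter, hmemNF]
      constructor
      · rintro ⟨h1, h2⟩; exact ⟨h1, h2.symm⟩
      · rintro ⟨h1, h2⟩; exact ⟨h1, h2.symm⟩
    calc ∑ a ∈ A, (M ∩ NF a).card
        = ∑ a ∈ A, ∑ y ∈ M, (if G.Adj a y then 1 else 0) := by
          refine Finset.sum_congr rfl fun a _ => ?_
          rw [e1 a, Finset.card_filter]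
      _ = ∑ y ∈ M, ∑ a ∈ A, (if G.Adj a y then 1 else 0) := Finset.sum_comm
      _ = ∑ y ∈ M, (A ∩ NF y).card := by
          refine Finset.sum_congr rfl fun y _ => ?_
          rw [e2 y, Finset.card_filter]
  -- Combine
  have hup : ((∑ a ∈ A, (M ∩ NF a).card : ℕ) : ℝ) ≤ (A.card : ℝ) * (2*(n:ℝ)/3 - A.card - 1) := by
    push_cast
    calc ∑ a ∈ A, ((M ∩ NF a).card : ℝ)
        ≤ ∑ _a ∈ A, (2*(n:ℝ)/3 - A.card - 1) := Finset.sum_le_sum step12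
      _ = (A.card : ℝ) * (2*(n:ℝ)/3 - A.card - 1) := by
          rw [Finset.sum_const, nsmul_eq_mul]
  have hlow : ((n:ℝ) - A.card - 1) * ((A.card : ℝ) - (n:ℝ)/3)
      ≤ ((∑ y ∈ M, (A ∩ NF y).card : ℕ) : ℝ) := by
    push_cast
    calc ((n:ℝ) - A.card - 1) * ((A.card : ℝ) - (n:ℝ)/3)
        = (M.card : ℝ) * ((A.card : ℝ) - (n:ℝ)/3) := by rw [hMcardR]; ring
      _ = ∑ _y ∈ M, ((A.card : ℝ) - (n:ℝ)/3) := by rw [Finset.sum_const, nsmul_eq_mul]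
      _ ≤ ∑ y ∈ M, ((A ∩ NF y).card : ℝ) := Finset.sum_le_sum fun y hy => le_of_lt (step3 y hy)
  have hkey : ((n:ℝ) - A.card - 1) * ((A.card : ℝ) - (n:ℝ)/3)
      ≤ (A.card : ℝ) * (2*(n:ℝ)/3 - A.card - 1) := by
    calc ((n:ℝ) - A.card - 1) * ((A.card : ℝ) - (n:ℝ)/3)
        ≤ ((∑ y ∈ M, (A ∩ NF y).card : ℕ) : ℝ) := hlow
      _ = ((∑ a ∈ A, (M ∩ NF a).card : ℕ) : ℝ) := by rw [hswap]
      _ ≤ (A.card : ℝ) * (2*(n:ℝ)/3 - A.card - 1) := hup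
  have hAhalf : (n:ℝ)/2 < (A.card : ℝ) := by rw [hA]; exact hdegF x₀
  nlinarith [mul_pos hnpos (show (0:ℝ) < 2*(A.card:ℝ) - n + 1 by linarith)]
end

section
/- Let G be a graph on n vertices such that deg(v) > n/2 for all vertices v, and such that |N(u) ∪ N(v)| ≤ 2n/3 for every edge uv. Then for every pair of vertices u, w (not necessarily distinct), |N(u) ∩ N(w)| > n/6. -/
open SimpleGraph Set

theorem common_neighbours_large {V : Type*} [Fintype V] (G : SimpleGraph V)
    (hdeg : ∀ v : V, (Fintype.card V : ℝ) / 2 < ((G.neighborSet v).ncard : ℝ))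
    (hun : ∀ u v : V, G.Adj u v →
      ((G.neighborSet u ∪ G.neighborSet v).ncard : ℝ) ≤ 2 * (Fintype.card V : ℝ) / 3) :
    ∀ u w : V, (Fintype.card V : ℝ) / 6 <
      ((G.neighborSet u ∩ G.neighborSet w).ncard : ℝ) := by
  intro u w
  have hn : (0:ℝ) < Fintype.card V := by
    have : Nonempty V := ⟨u⟩
    exact_mod_cast Fintype.card_pos
  have huniv : ∀ s : Set V, (s.ncard : ℝ) ≤ Fintype.card V := by
    intro s
    have h := Set.ncard_le_ncard (Set.subset_univ s) Set.finite_univ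
    rw [Set.ncard_univ, Nat.card_eq_fintype_card] at h
    exact_mod_cast h
  have hie : ∀ s t : Set V,
      ((s ∩ t).ncard : ℝ) + ((s ∪ t).ncard : ℝ) = s.ncard + t.ncard := by
    intro s t
    have := Set.ncard_inter_add_ncard_union s t (Set.toFinite s) (Set.toFinite t)
    exact_mod_cast this
  have key : ∀ a b : V, G.Adj a b →
      (Fintype.card V : ℝ) / 3 < ((G.neighborSet a ∩ G.neighborSet b).ncard : ℝ) := by
    intro a b hab
    have h1 := hdeg a; have h2 := hdeg b; have h3 := hun a b hab
    have h4 := hie (G.neighborSet a) (G.neighborSet b)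
    linarith
  by_cases huw : u = w
  · subst huw
    rw [Set.inter_self]
    have := hdeg u
    linarith
  by_cases hadj : G.Adj u w
  · have := key u w hadj
    linarith
  -- non-adjacent case: find common neighbor x
  have hpos : (0:ℝ) < ((G.neighborSet u ∩ G.neighborSet w).ncard : ℝ) := by
    have h4 := hie (G.neighborSet u) (G.neighborSet w)
    have h5 := huniv (G.neighborSet u ∪ G.neighborSet w)
    have h1 := hdeg u; have h2 := hdeg w
    linarith
  have hne : (G.neighborSet u ∩ G.neighborSet w).Nonempty := by
    rw [Set.nonempty_iff_ne_empty]
    intro h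
    rw [h] at hpos
    simp at hpos
  obtain ⟨x, hxu, hxw⟩ := hne
  have hux : G.Adj u x := hxu
  have hwx : G.Adj w x := hxw
  set A := G.neighborSet u ∪ G.neighborSet x with hA
  set B := G.neighborSet w ∪ G.neighborSet x with hB
  have hAcard := hun u x hux
  have hBcard := hun w x hwx
  have hABinter : ((G.neighborSet x).ncard : ℝ) ≤ ((A ∩ B).ncard : ℝ) := by
    have hsub : G.neighborSet x ⊆ A ∩ B := by
      intro y hy
      exact ⟨Or.inr hy, Or.inr hy⟩
    exact_mod_cast Set.ncard_le_ncard hsub (Set.toFinite _)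
  have hABie := hie A B
  have hsub2 : ((G.neighborSet u ∪ G.neighborSet w).ncard : ℝ) ≤ ((A ∪ B).ncard : ℝ) := by
    have hsub : G.neighborSet u ∪ G.neighborSet w ⊆ A ∪ B := by
      rintro y (hy | hy)
      · exact Or.inl (Or.inl hy)
      · exact Or.inr (Or.inl hy)
    exact_mod_cast Set.ncard_le_ncard hsub (Set.toFinite _)
  have h4 := hie (G.neighborSet u) (G.neighborSet w)
  have h1 := hdeg u; have h2 := hdeg w; have hx := hdeg x
  linarith
end

section
/- For every ε > 0 there is no graph G with |V(G)| = n > 1 such that deg(v) + 1 ≥ (1/2 + ε)n for every vertex v and |N(u) ∪ N(v)| ≤ (2/3 − ε)n for every edge uv. -/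
open SimpleGraph Set

theorem no_half_third_graph (ε : ℝ) (hε : 0 < ε) :
    ¬ ∃ (n : ℕ) (G : SimpleGraph (Fin n)), IsDEGraph (1/2 + ε) (1/3 + ε) G := by
  rintro ⟨n, G, hcard, hdeg, hunion⟩
  classical
  simp only [Fintype.card_fin] at hcard hdeg hunion
  have hn2 : 2 ≤ n := hcard
  have hn0 : (0:ℝ) < n := by positivity
  have hNS : ∀ w, (G.neighborSet w).ncard = G.degree w := by
    intro w
    rw [Set.ncard_eq_toFinset_card', ← SimpleGraph.neighborFinset_def,
      SimpleGraph.card_neighborFinset_eq_degree]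
  have hNU : ∀ x y, (G.neighborSet x ∪ G.neighborSet y).ncard
      = (G.neighborFinset x ∪ G.neighborFinset y).card := by
    intro x y
    have he : G.neighborSet x ∪ G.neighborSet y
        = ((G.neighborFinset x ∪ G.neighborFinset y : Finset (Fin n)) : Set (Fin n)) := by
      ext w
      simp [SimpleGraph.mem_neighborFinset, SimpleGraph.mem_neighborSet]
    rw [he, Set.ncard_coe_finset]
  -- integer degree bound : n ≤ 2 deg + 1
  have hdegN : ∀ w, n ≤ 2 * G.degree w + 1 := by
    intro w
    have h := hdeg w
    rw [hNS w] at h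
    have h2 : (n : ℝ) < 2 * (G.degree w : ℝ) + 2 := by nlinarith
    have h3 : n < 2 * G.degree w + 2 := by exact_mod_cast h2
    omega
  -- integer union bound : 3 card + 1 ≤ 2 n
  have hunN : ∀ x y, G.Adj x y →
      3 * (G.neighborFinset x ∪ G.neighborFinset y).card + 1 ≤ 2 * n := by
    intro x y hxy
    have h := hunion x y hxy
    rw [hNU x y] at h
    have h2 : (3 * (G.neighborFinset x ∪ G.neighborFinset y).card : ℝ) < 2 * n := by
      nlinarith
    have h3 : 3 * (G.neighborFinset x ∪ G.neighborFinset y).card < 2 * n := by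
      exact_mod_cast h2
    omega
  -- pick a vertex of minimum degree
  have : Nonempty (Fin n) := ⟨⟨0, by omega⟩⟩
  obtain ⟨u, -, hu⟩ := Finset.exists_min_image Finset.univ (fun w => G.degree w) Finset.univ_nonempty
  set d := G.degree u with hd
  have hud : ∀ w, d ≤ G.degree w := fun w => hu w (Finset.mem_univ w)
  have hdpos : 0 < d := by have := hdegN u; omega
  obtain ⟨v, hadj⟩ := (SimpleGraph.degree_pos_iff_exists_adj (G := G) (v := u)).mp hdpos
  set A := G.neighborFinset u with hA
  have huA : u ∉ A := by simp [hA]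
  have hAcard : A.card = d := rfl
  set B := Finset.univ \ insert u A with hB
  have hBmem : ∀ b, b ∈ B ↔ (b ≠ u ∧ b ∉ A) := by
    intro b; simp [hB]
  have hdn : d + 1 ≤ n := by
    have := G.degree_lt_card_verts u
    simp only [Fintype.card_fin] at this; omega
  have hBcard : B.card = n - (d + 1) := by
    rw [hB, Finset.card_sdiff_of_subset (Finset.subset_univ _), Finset.card_insert_of_notMem huA,
      Finset.card_univ, Fintype.card_fin, hAcard]
  -- d + 1 ≤ union of edge uv, so 3d + 4 + ... bound
  have h3d : 3 * d + 4 ≤ 2 * n := by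
    have hsub : insert u A ⊆ A ∪ G.neighborFinset v := by
      apply Finset.insert_subset
      · exact Finset.mem_union_right _ (by simp [SimpleGraph.mem_neighborFinset, hadj.symm])
      · exact Finset.subset_union_left
    have h1 : d + 1 ≤ (A ∪ G.neighborFinset v).card := by
      calc d + 1 = (insert u A).card := by
            rw [Finset.card_insert_of_notMem huA, hAcard]
        _ ≤ _ := Finset.card_le_card hsub
    have h2 := hunN u v hadj
    rw [← hA] at h2
    omega
  -- F4: every b in B has many neighbors in A
  have hF4 : ∀ b ∈ B, 9 * d + 8 ≤ 3 * (G.neighborFinset b ∩ A).card + 4 * n := by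
    intro b hb
    obtain ⟨hbu, hbA⟩ := (hBmem b).mp hb
    have hnadj : ¬ G.Adj u b := fun h => hbA (by simp [hA, SimpleGraph.mem_neighborFinset, h])
    -- the intersection is nonempty
    have hsub2 : G.neighborFinset b ∪ A ⊆ (Finset.univ \ {u, b}) := by
      intro x hx
      simp only [Finset.mem_union, SimpleGraph.mem_neighborFinset, hA] at hx
      simp only [Finset.mem_sdiff, Finset.mem_univ, Finset.mem_insert, Finset.mem_singleton,
        true_and]
      push_neg
      rcases hx with hx | hx
      · exact ⟨fun h => hnadj (h ▸ hx.symm), fun h => (h ▸ hx).ne rfl⟩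
      · exact ⟨fun h => (h ▸ hx).ne' rfl, fun h => hbA (by simp [hA, SimpleGraph.mem_neighborFinset, h ▸ hx])⟩
    have hcard2 : (G.neighborFinset b ∪ A).card ≤ n - 2 := by
      have := Finset.card_le_card hsub2
      rwa [Finset.card_sdiff_of_subset (by simp), Finset.card_univ, Fintype.card_fin,
        Finset.card_insert_of_notMem (by simp [hbu.symm]), Finset.card_singleton] at this
    have hiu := Finset.card_union_add_card_inter (G.neighborFinset b) A
    have hdb := hdegN b
    have hdbd : d ≤ G.degree b := hud b
    have hbdeg : (G.neighborFinset b).card = G.degree b := rfl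
    have h7 : n ≤ 2 * A.card + 1 := by rw [hAcard]; exact hdegN u
    have hYpos : 0 < (G.neighborFinset b ∩ A).card := by omega
    obtain ⟨y, hy⟩ := Finset.card_pos.mp hYpos
    rw [Finset.mem_inter] at hy
    have hadj_by : G.Adj b y := by
      have := hy.1; rwa [SimpleGraph.mem_neighborFinset] at this
    have hadj_uy : G.Adj u y := by
      have := hy.2; rw [hA] at this; rwa [SimpleGraph.mem_neighborFinset] at this
    -- main step
    set A' := G.neighborFinset y ∩ G.neighborFinset u with hA'
    set B' := G.neighborFinset y ∩ G.neighborFinset b with hB'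
    have h1 : (A' ∪ B').card + 2 ≤ G.degree y := by
      have hsub3 : insert u (insert b (A' ∪ B')) ⊆ G.neighborFinset y := by
        apply Finset.insert_subset
        · simp [SimpleGraph.mem_neighborFinset, hadj_uy.symm]
        · apply Finset.insert_subset
          · simp [SimpleGraph.mem_neighborFinset, hadj_by.symm]
          · intro x hx
            rcases Finset.mem_union.mp hx with h | h
            · exact Finset.mem_of_mem_inter_left h
            · exact Finset.mem_of_mem_inter_left h
      have hb_nm : b ∉ A' ∪ B' := by
        intro h
        rcases Finset.mem_union.mp h with h | h
        · exact hnadj (by simpa [SimpleGraph.mem_neighborFinset] using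
            (Finset.mem_of_mem_inter_right h))
        · exact (G.loopless.irrefl b) (by simpa [SimpleGraph.mem_neighborFinset] using
            (Finset.mem_of_mem_inter_right h))
      have hu_nm : u ∉ insert b (A' ∪ B') := by
        simp only [Finset.mem_insert]
        push_neg
        refine ⟨hbu.symm, fun h => ?_⟩
        rcases Finset.mem_union.mp h with h | h
        · exact (G.loopless.irrefl u) (by simpa [SimpleGraph.mem_neighborFinset] using
            (Finset.mem_of_mem_inter_right h))
        · exact hnadj (by
            have := Finset.mem_of_mem_inter_right h
            rw [SimpleGraph.mem_neighborFinset] at this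
            exact this.symm)
      calc (A' ∪ B').card + 2 = (insert u (insert b (A' ∪ B'))).card := by
            rw [Finset.card_insert_of_notMem hu_nm, Finset.card_insert_of_notMem hb_nm]
        _ ≤ (G.neighborFinset y).card := Finset.card_le_card hsub3
        _ = G.degree y := rfl
    have h2 : A' ∩ B' ⊆ G.neighborFinset b ∩ A := by
      intro x hx
      simp only [hA', hB', Finset.mem_inter, hA] at hx ⊢
      exact ⟨hx.2.2, hx.1.2⟩
    have h2c : (A' ∩ B').card ≤ (G.neighborFinset b ∩ A).card := Finset.card_le_card h2
    have e1 := Finset.card_union_add_card_inter (G.neighborFinset y) (G.neighborFinset u)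
    have e2 := hunN y u hadj_uy.symm
    have e3 := Finset.card_union_add_card_inter (G.neighborFinset y) (G.neighborFinset b)
    have e4 := hunN y b hadj_by.symm
    have e5 := Finset.card_union_add_card_inter A' B'
    have hdy : d ≤ G.degree y := hud y
    have hydeg : (G.neighborFinset y).card = G.degree y := rfl
    have hudeg : (G.neighborFinset u).card = d := rfl
    have e6 : (G.neighborFinset y ∩ G.neighborFinset b).card = B'.card := rfl
    have e7 : (G.neighborFinset y ∩ G.neighborFinset u).card = A'.card := rfl
    omega
  -- capacity: every s in A has few neighbors in B
  have hcap : ∀ s ∈ A, 3 * (G.neighborFinset s ∩ B).card + 3 * d + 4 ≤ 2 * n := by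
    intro s hs
    have hadj_us : G.Adj u s := by
      rw [hA, SimpleGraph.mem_neighborFinset] at hs; exact hs
    have hsub : insert u (A ∪ (G.neighborFinset s ∩ B)) ⊆ A ∪ G.neighborFinset s := by
      apply Finset.insert_subset
      · exact Finset.mem_union_right _ (by simp [SimpleGraph.mem_neighborFinset, hadj_us.symm])
      · apply Finset.union_subset Finset.subset_union_left
        intro x hx
        exact Finset.mem_union_right _ (Finset.mem_of_mem_inter_left hx)
    have hdisj : Disjoint A (G.neighborFinset s ∩ B) := by
      rw [Finset.disjoint_right]
      intro x hx
      have hxB := Finset.mem_of_mem_inter_right hx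
      exact fun hxA => ((hBmem x).mp hxB).2 hxA
    have hu_nm : u ∉ A ∪ (G.neighborFinset s ∩ B) := by
      intro h
      rcases Finset.mem_union.mp h with h | h
      · exact huA h
      · exact ((hBmem u).mp (Finset.mem_of_mem_inter_right h)).1 rfl
    have h1 : d + (G.neighborFinset s ∩ B).card + 1 ≤ (A ∪ G.neighborFinset s).card := by
      calc d + (G.neighborFinset s ∩ B).card + 1
          = (insert u (A ∪ (G.neighborFinset s ∩ B))).card := by
            rw [Finset.card_insert_of_notMem hu_nm, Finset.card_union_of_disjoint hdisj, hAcard]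
        _ ≤ _ := Finset.card_le_card hsub
    have h2 := hunN u s hadj_us
    rw [← hA] at h2
    omega
  -- double counting
  have hL : ∀ b : Fin n, (G.neighborFinset b ∩ A).card
      = (A.filter fun a => G.Adj a b).card := by
    intro b
    congr 1
    ext x
    simp only [Finset.mem_inter, SimpleGraph.mem_neighborFinset, Finset.mem_filter, hA]
    exact ⟨fun ⟨h1, h2⟩ => ⟨h2, h1.symm⟩, fun ⟨h1, h2⟩ => ⟨h2.symm, h1⟩⟩
  have hR : ∀ a : Fin n, (G.neighborFinset a ∩ B).card
      = (B.filter fun b => G.Adj a b).card := by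
    intro a
    congr 1
    ext x
    simp only [Finset.mem_inter, SimpleGraph.mem_neighborFinset, Finset.mem_filter]
    tauto
  have hsum : ∑ b ∈ B, (G.neighborFinset b ∩ A).card
      = ∑ a ∈ A, (G.neighborFinset a ∩ B).card := by
    simp_rw [hL, hR, Finset.card_filter]
    exact Finset.sum_comm
  -- put it together in ℤ
  have hlow : (B.card : ℤ) * (9 * d + 8 - 4 * n) ≤
      3 * ∑ b ∈ B, ((G.neighborFinset b ∩ A).card : ℤ) := by
    calc (B.card : ℤ) * (9 * d + 8 - 4 * n) = ∑ _b ∈ B, ((9:ℤ) * d + 8 - 4 * n) := by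
          rw [Finset.sum_const, nsmul_eq_mul]
      _ ≤ ∑ b ∈ B, 3 * ((G.neighborFinset b ∩ A).card : ℤ) := by
          apply Finset.sum_le_sum
          intro b hb
          have := hF4 b hb
          push_cast
          push_cast at this
          linarith
      _ = 3 * ∑ b ∈ B, ((G.neighborFinset b ∩ A).card : ℤ) := by
          rw [Finset.mul_sum]
  have hhigh : 3 * ∑ a ∈ A, ((G.neighborFinset a ∩ B).card : ℤ)
      ≤ (d : ℤ) * (2 * n - 3 * d - 4) := by
    calc 3 * ∑ a ∈ A, ((G.neighborFinset a ∩ B).card : ℤ)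
        = ∑ a ∈ A, 3 * ((G.neighborFinset a ∩ B).card : ℤ) := by rw [Finset.mul_sum]
      _ ≤ ∑ _a ∈ A, ((2 * n - 3 * d - 4 : ℤ)) := by
          apply Finset.sum_le_sum
          intro a ha
          have := hcap a ha
          push_cast
          push_cast at this
          linarith
      _ = (d : ℤ) * (2 * n - 3 * d - 4) := by
          rw [Finset.sum_const, nsmul_eq_mul, hAcard]
  have hsum' : ∑ b ∈ B, ((G.neighborFinset b ∩ A).card : ℤ)
      = ∑ a ∈ A, ((G.neighborFinset a ∩ B).card : ℤ) := by
    exact_mod_cast congrArg (Nat.cast : ℕ → ℤ) hsum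
  have hBcard' : (B.card : ℤ) = (n : ℤ) - 1 - d := by
    rw [hBcard]
    push_cast [Nat.cast_sub hdn]
    ring
  have hmain : ((n : ℤ) - 1 - d) * (9 * d + 8 - 4 * n) ≤ (d : ℤ) * (2 * n - 3 * d - 4) := by
    rw [← hBcard']
    calc (B.card : ℤ) * (9 * d + 8 - 4 * n)
        ≤ 3 * ∑ b ∈ B, ((G.neighborFinset b ∩ A).card : ℤ) := hlow
      _ = 3 * ∑ a ∈ A, ((G.neighborFinset a ∩ B).card : ℤ) := by rw [hsum']
      _ ≤ (d : ℤ) * (2 * n - 3 * d - 4) := hhigh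
  -- final contradiction
  have hd1 : (n : ℤ) ≤ 2 * d + 1 := by exact_mod_cast hdegN u
  have h3d' : 3 * (d : ℤ) + 4 ≤ 2 * n := by exact_mod_cast h3d
  have hn2' : (2 : ℤ) ≤ n := by exact_mod_cast hn2
  nlinarith [mul_nonneg (by linarith : (0:ℤ) ≤ 2 * d - n + 1) (by linarith : (0:ℤ) ≤ 2 * n - 4 - 3 * d),
    mul_nonneg (by linarith : (0:ℤ) ≤ 2 * d - n + 1) (by linarith : (0:ℤ) ≤ 4 * n - 2)]
end

section
/- For all integers n ≥ m ≥ 3, the Ramsey number of the double star satisfies r(S(n,m)) ≥ max(2n + 2, n + 2m + 2). -/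
open SimpleGraph Set

/-!
Every copy of `S(n,m)` has an edge `uv` with `deg u ≥ n + 1`, `deg v ≥ m + 1` and
`|N(u) ∪ N(v)| ≥ n + m + 2`, so a 2-colouring of `K_N` in which neither colour has such an edge
shows `N < r(S(n,m))`. On `n + 2m + 1` vertices, `K_{n+m+1,m}` is such a colouring: every edge
has an endpoint of degree `m`, while the complement is a disjoint union of cliques with at most
`n + m + 1` vertices. For `n > 2m` one needs `K_{2n+1}`. If `n` is even, an `n`-regular
circulant graph works, since both colours then have maximum degree `n`. If `n` is odd there is no
`n`-regular graph on `2n + 1` vertices, so one vertex `w` gets degree `n + 1` and all others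
degree `n`. Then `w` is the only possible centre of the `n`-star, and the `m`-star (`m ≥ 3`)
cannot be completed because each neighbour of `w` has at most two neighbours outside `N(w) ∪ {w}`.
-/

open Finset

namespace HasDoubleStar

variable {V W : Type*} {G : SimpleGraph V} {n m : ℕ}

theorem map {H : SimpleGraph W} (f : G ↪g H) (h : HasDoubleStar G n m) : HasDoubleStar H n m := by
  obtain ⟨u, v, A, B, huv, hA, hB, hvA, huB, hAB, hAn, hBm⟩ := h
  refine ⟨f u, f v, A.map f.toEmbedding, B.map f.toEmbedding, f.map_adj_iff.2 huv, ?_, ?_, ?_, ?_,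
    (disjoint_map _).2 hAB, by rw [card_map, hAn], by rw [card_map, hBm]⟩
  · rw [coe_map]
    rintro _ ⟨a, ha, rfl⟩
    exact f.map_adj_iff.2 (hA ha)
  · rw [coe_map]
    rintro _ ⟨b, hb, rfl⟩
    exact f.map_adj_iff.2 (hB hb)
  · simpa using hvA
  · simpa using huB

theorem exists_adj [Fintype V] [DecidableEq V] [DecidableRel G.Adj] (h : HasDoubleStar G n m) :
    ∃ u v, G.Adj u v ∧ n + 1 ≤ G.degree u ∧ m + 1 ≤ G.degree v ∧
      n + m + 2 ≤ #(G.neighborFinset u ∪ G.neighborFinset v) := by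
  obtain ⟨u, v, A, B, huv, hA, hB, hvA, huB, hAB, hAn, hBm⟩ := h
  have hAu : insert v A ⊆ G.neighborFinset u :=
    insert_subset (by simpa using huv) fun a ha => by simpa using hA ha
  have hBv : insert u B ⊆ G.neighborFinset v :=
    insert_subset (by simpa using huv.symm) fun b hb => by simpa using hB hb
  have huA : u ∉ A := fun hu => G.loopless.irrefl u (hA hu)
  have hvB : v ∉ B := fun hv => G.loopless.irrefl v (hB hv)
  have hdisj : Disjoint (insert v A) (insert u B) := by
    simp [huv.ne, huA, hvB, hAB]
  refine ⟨u, v, huv, ?_, ?_, ?_⟩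
  · simpa [card_insert_of_notMem hvA, hAn] using Finset.card_le_card hAu
  · simpa [card_insert_of_notMem huB, hBm] using Finset.card_le_card hBv
  · calc n + m + 2 = #(insert v A ∪ insert u B) := by
          rw [card_union_of_disjoint hdisj, card_insert_of_notMem hvA, card_insert_of_notMem huB]
          omega
      _ ≤ _ := Finset.card_le_card (union_subset_union hAu hBv)

end HasDoubleStar

section Ramsey

variable {V : Type*} [Fintype V] {G : SimpleGraph V} {n m : ℕ}

theorem not_hasDoubleStar_of_degree_le [DecidableRel G.Adj] (h : ∀ v, G.degree v ≤ n) :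
    ¬ HasDoubleStar G n m := fun hG => by
  classical
  obtain ⟨u, -, -, hu, -⟩ := hG.exists_adj
  exact hu.not_gt (Nat.lt_succ_of_le (h u))

theorem hasDoubleStar_of_adj [DecidableEq V] [DecidableRel G.Adj] {u v : V} (huv : G.Adj u v)
    (hu : n + m + 1 ≤ G.degree u) (hv : m + 1 ≤ G.degree v) : HasDoubleStar G n m := by
  have huv' : u ∈ G.neighborFinset v := by simpa using huv.symm
  obtain ⟨B, hB, hBm⟩ := Finset.exists_subset_card_eq (s := (G.neighborFinset v).erase u) (n := m)
    (by rw [card_erase_of_mem huv', card_neighborFinset_eq_degree]; omega)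
  obtain ⟨A, hA, hAn⟩ :=
    Finset.exists_subset_card_eq (s := G.neighborFinset u \ insert v B) (n := n) (by
      have := le_card_sdiff (insert v B) (G.neighborFinset u)
      have := card_insert_le v B
      rw [card_neighborFinset_eq_degree] at *
      omega)
  refine ⟨u, v, A, B, huv, fun a ha => ?_, fun b hb => ?_, fun hv => ?_, fun hu => ?_, ?_, hAn, hBm⟩
  · simpa using (mem_sdiff.1 (hA ha)).1
  · simpa using (mem_erase.1 (hB hb)).2
  · simpa using (mem_sdiff.1 (hA hv)).2
  · simpa using (mem_erase.1 (hB hu)).1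
  · exact disjoint_left.2 fun a ha haB => (mem_sdiff.1 (hA ha)).2 (mem_insert_of_mem haB)

theorem hasDoubleStar_or_compl_of_degree [DecidableEq V] [DecidableRel G.Adj] (s : Finset V)
    (hs : n + m + 2 ≤ #s) (hdeg : ∀ v ∈ s, n + m + 1 ≤ G.degree v) :
    HasDoubleStar G n m ∨ HasDoubleStar Gᶜ n m := by
  by_cases hadj : ∃ u ∈ s, ∃ v ∈ s, G.Adj u v
  · obtain ⟨u, hu, v, hv, huv⟩ := hadj
    exact .inl (hasDoubleStar_of_adj huv (hdeg u hu) (by linarith [hdeg v hv]))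
  push Not at hadj
  have hdegc : ∀ v ∈ s, n + m + 1 ≤ Gᶜ.degree v := fun v hv =>
    calc n + m + 1 ≤ #(s.erase v) := by rw [card_erase_of_mem hv]; omega
      _ ≤ Gᶜ.degree v := Finset.card_le_card fun w hw => by
        obtain ⟨hwv, hw⟩ := mem_erase.1 hw
        simpa [hwv.symm] using hadj v hv w hw
  obtain ⟨u, hu, v, hv, huv⟩ := one_lt_card.1 (by omega : 1 < #s)
  exact .inr (hasDoubleStar_of_adj ⟨huv, hadj u hu v hv⟩ (hdegc u hu) (by linarith [hdegc v hv]))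

theorem hasDoubleStar_or_compl (G : SimpleGraph V) (hV : 2 * n + 2 * m + 3 ≤ Fintype.card V) :
    HasDoubleStar G n m ∨ HasDoubleStar Gᶜ n m := by
  classical
  let s := ({v | n + m + 1 ≤ G.degree v} : Finset V)
  let t := ({v | n + m + 1 ≤ Gᶜ.degree v} : Finset V)
  have hst : Fintype.card V ≤ #s + #t := calc
    Fintype.card V = #(s ∪ t) := by
      rw [← card_univ]
      congr 1
      ext v
      have := G.degree_compl v
      simp only [Finset.mem_univ, Finset.mem_union, Finset.mem_filter, true_and, true_iff, s, t]
      omega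
    _ ≤ #s + #t := card_union_le s t
  by_cases hs : n + m + 2 ≤ #s
  · exact hasDoubleStar_or_compl_of_degree s hs (by simp [s])
  · have := hasDoubleStar_or_compl_of_degree (G := Gᶜ) (n := n) (m := m) t (by omega) (by simp [t])
    rwa [compl_compl, or_comm] at this

theorem lt_doubleStarRamsey (G : SimpleGraph V) (hG : ¬ HasDoubleStar G n m)
    (hGc : ¬ HasDoubleStar Gᶜ n m) : Fintype.card V < doubleStarRamsey n m := by
  unfold doubleStarRamsey
  -- `sInf ∅ = 0` in `ℕ`, so the defining set must be shown nonempty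
  refine le_csInf ⟨2 * n + 2 * m + 3, fun G => ?_⟩ fun N hN => ?_
  · exact hasDoubleStar_or_compl G (by simp)
  by_contra! hNV
  let f : Fin N ↪ V :=
    (Fin.castLEEmb (Nat.le_of_lt_succ hNV)).trans (Fintype.equivFin V).symm.toEmbedding
  have hcompl : (G.comap f)ᶜ = Gᶜ.comap f := by ext; simp [f.injective.eq_iff]
  rcases hN (G.comap f) with h | h
  · exact hG (h.map (Embedding.comap f G))
  · rw [hcompl] at h
    exact hGc (h.map (Embedding.comap f Gᶜ))

theorem lt_doubleStarRamsey_of_isRegularOfDegree [DecidableEq V] [DecidableRel G.Adj]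
    (hG : G.IsRegularOfDegree n) (hV : Fintype.card V = 2 * n + 1) :
    2 * n + 1 < doubleStarRamsey n m :=
  hV ▸ lt_doubleStarRamsey G (not_hasDoubleStar_of_degree_le fun v => (hG v).le)
    (not_hasDoubleStar_of_degree_le fun v => by rw [hG.compl v, hV]; omega)

end Ramsey

section CompleteBipartite

variable {α β : Type*} [Fintype β] {n m : ℕ}

theorem completeBipartiteGraph_degree_inl (a : α)
    [Fintype ((completeBipartiteGraph α β).neighborSet (.inl a))] :
    (completeBipartiteGraph α β).degree (.inl a) = Fintype.card β := by
  have : (completeBipartiteGraph α β).neighborFinset (.inl a) = univ.map .inr := by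
    ext (_ | _) <;> simp
  rw [← card_neighborFinset_eq_degree, this, card_map, card_univ]

theorem not_hasDoubleStar_completeBipartiteGraph [Fintype α] (hβ : Fintype.card β ≤ m)
    (hmn : m ≤ n) : ¬ HasDoubleStar (completeBipartiteGraph α β) n m := fun h => by
  classical
  obtain ⟨u, v, huv, hu, hv, -⟩ := h.exists_adj
  rcases u with a | b
  · rw [completeBipartiteGraph_degree_inl] at hu
    omega
  rcases v with a | b'
  · rw [completeBipartiteGraph_degree_inl] at hv
    omega
  · simp at huv

theorem not_hasDoubleStar_compl_completeBipartiteGraph [Fintype α]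
    (hα : Fintype.card α ≤ n + m + 1) (hβ : Fintype.card β ≤ n + m + 1) :
    ¬ HasDoubleStar (completeBipartiteGraph α β)ᶜ n m := fun h => by
  classical
  obtain ⟨u, v, huv, -, -, huv'⟩ := h.exists_adj
  rcases u with a | b <;> rcases v with a' | b'
  · have : (completeBipartiteGraph α β)ᶜ.neighborFinset (.inl a) ∪
        (completeBipartiteGraph α β)ᶜ.neighborFinset (.inl a') ⊆ univ.map .inl := by
      rintro (_ | _) <;> simp
    have := Finset.card_le_card this
    simp at this
    omega
  · simp at huv
  · simp at huv
  · have : (completeBipartiteGraph α β)ᶜ.neighborFinset (.inr b) ∪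
        (completeBipartiteGraph α β)ᶜ.neighborFinset (.inr b') ⊆ univ.map .inr := by
      rintro (_ | _) <;> simp
    have := Finset.card_le_card this
    simp at this
    omega

end CompleteBipartite

theorem card_image_intCast_zmod {N : ℕ} (A : Finset ℤ) (hA : ∀ a ∈ A, ∀ b ∈ A, |a - b| < N) :
    #(A.image ((↑) : ℤ → ZMod N)) = #A :=
  card_image_of_injOn fun a ha b hb hab => by
    have := Int.eq_zero_of_abs_lt_dvd ((ZMod.intCast_eq_intCast_iff_dvd_sub a b N).1 hab)
      (by simpa [abs_sub_comm] using hA b hb a ha)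
    omega

theorem degree_circulantGraph {Z : Type*} [AddCommGroup Z] (s : Set Z) [Fintype s] (hs0 : 0 ∉ s)
    (hs : ∀ d ∈ s, -d ∈ s) (x : Z) [Fintype ((circulantGraph s).neighborSet x)] :
    (circulantGraph s).degree x = #s.toFinset := by
  have : (circulantGraph s).neighborFinset x = s.toFinset.map (addLeftEmbedding x) := by
    ext y
    simp only [mem_neighborFinset, circulantGraph_adj, Set.mem_toFinset, mem_map,
      addLeftEmbedding_apply]
    constructor
    · rintro ⟨-, h | h⟩
      · exact ⟨y - x, by simpa using hs _ h, add_sub_cancel x y⟩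
      · exact ⟨y - x, h, add_sub_cancel x y⟩
    · rintro ⟨d, hd, rfl⟩
      refine ⟨fun h => hs0 ?_, .inr (by simpa using hd)⟩
      simpa [left_eq_add.1 h] using hd
  rw [← card_neighborFinset_eq_degree, this, card_map]

theorem isRegularOfDegree_circulantGraph_Icc {N h : ℕ} [NeZero N] (hN : 2 * h < N)
    [DecidableRel (circulantGraph (↑(((Finset.Icc (-h : ℤ) h).erase 0).image ((↑) : ℤ → ZMod N))
      : Set (ZMod N))).Adj] :
    (circulantGraph (↑(((Finset.Icc (-h : ℤ) h).erase 0).image ((↑) : ℤ → ZMod N))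
      : Set (ZMod N))).IsRegularOfDegree (2 * h) := by
  intro x
  rw [degree_circulantGraph, toFinset_coe]
  · rw [card_image_intCast_zmod, card_erase_of_mem (by simp), Int.card_Icc]
    · omega
    · simp only [mem_erase, Finset.mem_Icc]
      intro a ha b hb
      rw [abs_sub_lt_iff]
      omega
  · simp only [Finset.mem_coe, Finset.mem_image, mem_erase, Finset.mem_Icc, not_exists, not_and]
    intro a ⟨ha0, ha⟩ h0
    exact ha0 (Int.eq_zero_of_abs_lt_dvd ((ZMod.intCast_zmod_eq_zero_iff_dvd a N).1 h0)
      (by rw [abs_lt]; omega))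
  · simp only [Finset.mem_coe, Finset.mem_image, mem_erase, Finset.mem_Icc]
    rintro _ ⟨a, ⟨ha0, ha⟩, rfl⟩
    exact ⟨-a, ⟨neg_ne_zero.2 ha0, by omega, by omega⟩, by simp⟩

section OddGraph

variable (c : ℕ)

def oddNonJumps : Finset (ZMod (2 * c)) := ({-1, 0, 1, (c : ℤ)} : Finset ℤ).image (↑)

/-- The colouring of `K_{4c+3}` for `n = 2c + 1`: the apex `none` is joined to the two twins
`some (.inl _)` and to the vertices `xᵢ = some (.inr (.inl i))`; the twins are joined to every
`xᵢ`; `xᵢ ~ xⱼ` unless `j - i ∈ {0, ±1, c}`; the vertices `yᵢ = some (.inr (.inr i))` form a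
clique, and `yᵢ` is joined to `xᵢ` and `xᵢ₊₁`. -/
def oddGraph : SimpleGraph (Option (Bool ⊕ ZMod (2 * c) ⊕ ZMod (2 * c))) where
  Adj
    | none, some (.inl _) | some (.inl _), none
    | none, some (.inr (.inl _)) | some (.inr (.inl _)), none
    | some (.inl _), some (.inr (.inl _)) | some (.inr (.inl _)), some (.inl _) => True
    | some (.inr (.inl i)), some (.inr (.inl j)) => (circulantGraph (↑(oddNonJumps c))ᶜ).Adj i j
    | some (.inr (.inl i)), some (.inr (.inr j)) | some (.inr (.inr j)), some (.inr (.inl i)) =>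
      i = j ∨ i = j + 1
    | some (.inr (.inr i)), some (.inr (.inr j)) => i ≠ j
    | _, _ => False
  symm := ⟨by rintro (_ | _ | _ | _) (_ | _ | _ | _) h <;> first | exact h | exact h.symm⟩
  loopless := ⟨by
    rintro (_ | _ | _ | _) h
    exacts [h, h, (circulantGraph _).loopless.irrefl _ h, h rfl]⟩

variable {c}

theorem neg_mem_oddNonJumps {d : ZMod (2 * c)} (hd : d ∈ oddNonJumps c) : -d ∈ oddNonJumps c := by
  simp only [oddNonJumps, Finset.mem_image, Finset.mem_insert, Finset.mem_singleton] at hd ⊢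
  obtain ⟨a, ha, rfl⟩ := hd
  rcases ha with rfl | rfl | rfl | rfl
  · exact ⟨1, by simp⟩
  · exact ⟨0, by simp⟩
  · exact ⟨-1, by simp⟩
  · -- `c` has order two
    refine ⟨c, by simp, ?_⟩
    rw [← Int.cast_neg, ZMod.intCast_eq_intCast_iff_dvd_sub]
    exact ⟨-1, by push_cast; ring⟩

theorem card_oddNonJumps (hc : 2 ≤ c) : #(oddNonJumps c) = 4 := by
  rw [oddNonJumps, card_image_intCast_zmod]
  · rw [card_insert_of_notMem, card_insert_of_notMem, card_pair] <;> simp <;> omega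
  · simp only [Finset.mem_insert, Finset.mem_singleton]
    rintro a (rfl | rfl | rfl | rfl) b (rfl | rfl | rfl | rfl) <;> rw [abs_sub_lt_iff] <;> omega

variable [NeZero c]

theorem oddGraph_degree_none [DecidableRel (oddGraph c).Adj] :
    (oddGraph c).degree none = 2 * c + 2 := by
  have : (oddGraph c).neighborFinset none = (univ.disjSum (univ.disjSum ∅)).map .some := by
    ext (_ | _ | _ | _) <;> simp only [mem_neighborFinset] <;> simp [oddGraph]
  rw [← card_neighborFinset_eq_degree, this]
  simp
  ring

theorem oddGraph_degree_some [DecidableRel (oddGraph c).Adj] (hc : 2 ≤ c)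
    (v : Bool ⊕ ZMod (2 * c) ⊕ ZMod (2 * c)) :
    (oddGraph c).degree (some v) = 2 * c + 1 := by
  have : Fact (1 < 2 * c) := ⟨by omega⟩
  rw [← card_neighborFinset_eq_degree]
  rcases v with b | i | i
  · have : (oddGraph c).neighborFinset (some (.inl b)) =
        insertNone ((∅ : Finset Bool).disjSum (univ.disjSum ∅)) := by
      ext (_ | _ | _ | _) <;> simp only [mem_neighborFinset] <;> simp [oddGraph]
    rw [this]
    simp
  · have : (oddGraph c).neighborFinset (some (.inr (.inl i))) = insertNone (univ.disjSum
        (((circulantGraph (↑(oddNonJumps c))ᶜ).neighborFinset i).disjSum {i, i - 1})) := by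
      ext (_ | _ | _ | j) <;> simp only [mem_neighborFinset] <;>
        simp [oddGraph, -circulantGraph_adj]
      rw [eq_sub_iff_add_eq, eq_comm (a := j), eq_comm (a := j + 1)]
    rw [this, card_insertNone, card_disjSum, card_disjSum, card_univ, Fintype.card_bool,
      card_neighborFinset_eq_degree, degree_circulantGraph _ (by simp [oddNonJumps])
      (fun d hd => by simpa using mt neg_mem_oddNonJumps (by simpa using hd)),
      card_pair fun h => one_ne_zero (sub_eq_self.1 h.symm)]
    simp [card_compl, card_oddNonJumps hc]
    omega
  · have : (oddGraph c).neighborFinset (some (.inr (.inr i))) = ((∅ : Finset Bool).disjSum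
        (({i, i + 1} : Finset (ZMod (2 * c))).disjSum (univ.erase i))).map .some := by
      ext (_ | _ | j | j) <;> simp only [mem_neighborFinset] <;> simp [oddGraph, eq_comm]
    rw [this, card_map, card_disjSum, card_disjSum, card_pair (left_ne_add.2 one_ne_zero),
      card_erase_of_mem (mem_univ _), card_univ, ZMod.card]
    simp
    omega

theorem oddGraph_neighborFinset_sdiff_subset [DecidableRel (oddGraph c).Adj]
    {v : Option (Bool ⊕ ZMod (2 * c) ⊕ ZMod (2 * c))} (hv : (oddGraph c).Adj none v) :
    ∃ a b, (oddGraph c).neighborFinset v \ (oddGraph c).neighborFinset none ⊆ {none, a, b} := by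
  rcases v with _ | _ | i | _
  · exact hv.elim
  · refine ⟨none, none, fun w hw => ?_⟩
    rcases w with _ | _ | _ | _ <;> simp only [Finset.mem_sdiff, mem_neighborFinset] at hw <;>
      simp_all [oddGraph]
  · refine ⟨some (.inr (.inr i)), some (.inr (.inr (i - 1))), fun w hw => ?_⟩
    rcases w with _ | _ | _ | j <;> simp only [Finset.mem_sdiff, mem_neighborFinset] at hw <;>
      simp_all [oddGraph]
    rcases hw with rfl | rfl <;> simp
  · exact hv.elim

theorem not_hasDoubleStar_oddGraph {m : ℕ} (hc : 2 ≤ c) (hm : 3 ≤ m) :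
    ¬ HasDoubleStar (oddGraph c) (2 * c + 1) m := fun h => by
  classical
  obtain ⟨u, v, huv, hu, -, hunion⟩ := h.exists_adj
  cases u with
  | some u =>
    rw [oddGraph_degree_some hc] at hu
    omega
  | none =>
    obtain ⟨a, b, hab⟩ := oddGraph_neighborFinset_sdiff_subset huv
    have := (Finset.card_le_card hab).trans card_le_three
    rw [Finset.union_comm, ← card_sdiff_add_card, card_neighborFinset_eq_degree,
      oddGraph_degree_none] at hunion
    omega

theorem not_hasDoubleStar_compl_oddGraph {m : ℕ} (hc : 2 ≤ c) :
    ¬ HasDoubleStar (oddGraph c)ᶜ (2 * c + 1) m := by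
  classical
  refine not_hasDoubleStar_of_degree_le fun v => ?_
  rw [degree_compl]
  cases v with
  | none => rw [oddGraph_degree_none]; simp; omega
  | some v => rw [oddGraph_degree_some hc]; simp; omega

end OddGraph

theorem add_two_mul_add_one_lt_doubleStarRamsey {n m : ℕ} (h : m ≤ n) :
    n + 2 * m + 1 < doubleStarRamsey n m := by
  have := lt_doubleStarRamsey (completeBipartiteGraph (Fin (n + m + 1)) (Fin m))
    (not_hasDoubleStar_completeBipartiteGraph (by simp) h)
    (not_hasDoubleStar_compl_completeBipartiteGraph (by simp) (by simp; omega))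
  simp at this
  omega

theorem two_mul_add_one_lt_doubleStarRamsey_of_even {n m : ℕ} (hn : Even n) :
    2 * n + 1 < doubleStarRamsey n m := by
  obtain ⟨h, rfl⟩ := hn
  exact lt_doubleStarRamsey_of_isRegularOfDegree (by
    simpa [two_mul] using isRegularOfDegree_circulantGraph_Icc (N := 2 * (h + h) + 1) (h := h)
      (by omega)) (by simp)

theorem two_mul_add_one_lt_doubleStarRamsey_of_odd {n m : ℕ} (hn : Odd n) (h5 : 5 ≤ n)
    (hm : 3 ≤ m) : 2 * n + 1 < doubleStarRamsey n m := by
  obtain ⟨c, rfl⟩ := hn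
  have : NeZero c := ⟨by omega⟩
  have := lt_doubleStarRamsey (oddGraph c) (not_hasDoubleStar_oddGraph (by omega) hm)
    (not_hasDoubleStar_compl_oddGraph (by omega))
  simp at this
  omega

theorem doubleStarRamsey_lower (n m : ℕ) (h3 : 3 ≤ m) (hnm : m ≤ n) :
    max (2*n + 2) (n + 2*m + 2) ≤ doubleStarRamsey n m := by
  have := add_two_mul_add_one_lt_doubleStarRamsey hnm
  rcases le_or_gt n (2 * m) with hn | hn
  · omega
  rcases Nat.even_or_odd n with he | ho
  · have := two_mul_add_one_lt_doubleStarRamsey_of_even (m := m) he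
    omega
  · have := two_mul_add_one_lt_doubleStarRamsey_of_odd ho (by omega) h3
    omega
end

section
/- For every p ∈ [0,1], the pair ((1+2p)/5, (3−2p)/5) is valid: for every ε > 0 there exists a graph G with |V(G)| > 1 such that deg(v) + 1 ≥ ((1+2p)/5 − ε)|V(G)| for every vertex v and |N(u) ∪ N(v)| ≤ (1 − (3−2p)/5 + ε)|V(G)| for every edge uv. -/
/-!
Replace the random bipartite graphs by circulant ones: on `ZMod 5 × ZMod m`, with the cliques
`{a} × ZMod m`, join `(a, x)` to `(a + 1, y)` when `(y - x).val < r`, where `r = ⌊pm⌋`. Every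
vertex then has `m - 1 + 2r` neighbours, while two adjacent vertices together see at most two
whole cliques and two windows of length `r`, i.e. `2m + 2r` vertices. Out of `5m` vertices this
gives `δ ≈ (1 + 2p)/5` and `1 - η ≈ (2 + 2p)/5`.
-/

open SimpleGraph Set

theorem IsDEGraph.of_iso {V W : Type*} [Fintype V] [Fintype W] {δ η : ℝ}
    {G : SimpleGraph V} {G' : SimpleGraph W} (e : G ≃g G') (h : IsDEGraph δ η G) :
    IsDEGraph δ η G' := by
  obtain ⟨hcard, hdeg, hunion⟩ := h
  have hVW : Fintype.card V = Fintype.card W := Fintype.card_congr e.toEquiv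
  have hnbr (v : V) : (G'.neighborSet (e v)).ncard = (G.neighborSet v).ncard := by
    rw [← e.image_neighborSet, ncard_image_of_injective _ e.injective]
  refine ⟨hVW ▸ hcard, fun w => ?_, fun u w huw => ?_⟩
  · rw [← e.apply_symm_apply w, hnbr, ← hVW]
    exact hdeg _
  · rw [← e.apply_symm_apply u, ← e.apply_symm_apply w, ← e.image_neighborSet,
      ← e.image_neighborSet, ← image_union, ncard_image_of_injective _ e.injective, ← hVW]
    exact hunion _ _ (e.symm.map_adj_iff.mpr huw)

theorem ZMod.ncard_setOf_val_apply_lt {m : ℕ} [NeZero m] (e : ZMod m ≃ ZMod m) {r : ℕ}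
    (hr : r ≤ m) : {y | (e y).val < r}.ncard = r := by
  have hrange : Iio r ⊆ range (ZMod.val ∘ e) := fun i (hi : i < r) =>
    ⟨e.symm i, by simp [ZMod.val_cast_of_lt (hi.trans_le hr)]⟩
  calc {y | (e y).val < r}.ncard = (ZMod.val ∘ e ⁻¹' Iio r).ncard := rfl
    _ = r := by
      rw [ncard_preimage_of_injective_subset_range ((ZMod.val_injective m).comp e.injective)
        hrange, ncard_Iio_nat]

theorem ZMod.ncard_setOf_val_sub_lt {m : ℕ} [NeZero m] (x : ZMod m) {r : ℕ} (hr : r ≤ m) :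
    {y | (y - x).val < r}.ncard = r :=
  ZMod.ncard_setOf_val_apply_lt (Equiv.subRight x) hr

theorem ZMod.ncard_setOf_val_sub_lt' {m : ℕ} [NeZero m] (x : ZMod m) {r : ℕ} (hr : r ≤ m) :
    {y | (x - y).val < r}.ncard = r :=
  ZMod.ncard_setOf_val_apply_lt (Equiv.subLeft x) hr

theorem Set.ncard_singleton_prod {α β : Type*} (a : α) (s : Set β) :
    (({a} : Set α) ×ˢ s).ncard = s.ncard := by
  rw [ncard_prod, ncard_singleton, one_mul]

theorem ZMod.five_ne_add_one (a : ZMod 5) : a ≠ a + 1 := by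
  revert a; decide

theorem ZMod.five_sub_one_ne (a : ZMod 5) : a - 1 ≠ a := by
  revert a; decide

theorem ZMod.five_add_one_ne_sub_one (a : ZMod 5) : a + 1 ≠ a - 1 := by
  revert a; decide

theorem Set.ncard_pair_prod_univ_union_le {α β : Type*} (a b c d : α) (s t : Set β) :
    (({a, b} : Set α) ×ˢ (univ : Set β) ∪ {c} ×ˢ s ∪ {d} ×ˢ t).ncard
      ≤ 2 * Nat.card β + s.ncard + t.ncard := by
  have hpair : ({a, b} : Set α).ncard ≤ 2 := (ncard_insert_le a {b}).trans (by simp)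
  calc _ ≤ (({a, b} : Set α) ×ˢ (univ : Set β)).ncard + ({c} ×ˢ s).ncard + ({d} ×ˢ t).ncard :=
        (ncard_union_le _ _).trans (Nat.add_le_add_right (ncard_union_le _ _) _)
    _ ≤ 2 * Nat.card β + s.ncard + t.ncard := by
      rw [ncard_prod, ncard_singleton_prod, ncard_singleton_prod, ncard_univ]
      gcongr

def sparseBlowupC5 (m r : ℕ) : SimpleGraph (ZMod 5 × ZMod m) where
  Adj u v := (u.1 = v.1 ∧ u.2 ≠ v.2) ∨ (v.1 = u.1 + 1 ∧ (v.2 - u.2).val < r) ∨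
    (u.1 = v.1 + 1 ∧ (u.2 - v.2).val < r)
  symm := ⟨fun _ _ => by tauto⟩
  loopless := ⟨fun u => by
    rintro (⟨-, h⟩ | ⟨h, -⟩ | ⟨h, -⟩)
    · exact h rfl
    all_goals exact u.1.five_ne_add_one h⟩

namespace sparseBlowupC5

variable {m r : ℕ}

theorem neighborSet_eq (a : ZMod 5) (x : ZMod m) :
    (sparseBlowupC5 m r).neighborSet (a, x) =
      {a} ×ˢ {x}ᶜ ∪ {a + 1} ×ˢ {y | (y - x).val < r} ∪ {a - 1} ×ˢ {y | (x - y).val < r} := by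
  ext ⟨b, y⟩
  simp only [mem_neighborSet, sparseBlowupC5, mem_union, mem_prod, mem_singleton_iff,
    mem_compl_iff, mem_ofPred_eq, eq_sub_iff_add_eq]
  grind

variable [NeZero m]

theorem ncard_neighborSet_add_one (hr : r ≤ m) (v : ZMod 5 × ZMod m) :
    ((sparseBlowupC5 m r).neighborSet v).ncard + 1 = m + 2 * r := by
  obtain ⟨a, x⟩ := v
  have hclique : ({x}ᶜ : Set (ZMod m)).ncard + 1 = m := by
    rw [← ncard_singleton x, ncard_compl_add_ncard, Nat.card_zmod]
  rw [neighborSet_eq, ncard_union_eq, ncard_union_eq, ncard_singleton_prod, ncard_singleton_prod,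
    ncard_singleton_prod, ZMod.ncard_setOf_val_sub_lt x hr,
    ZMod.ncard_setOf_val_sub_lt' x hr]
  · omega
  · exact disjoint_prod.mpr (Or.inl (disjoint_singleton.mpr a.five_ne_add_one))
  · refine disjoint_union_left.mpr ⟨?_, ?_⟩ <;> refine disjoint_prod.mpr (Or.inl ?_)
    · exact disjoint_singleton.mpr a.five_sub_one_ne.symm
    · exact disjoint_singleton.mpr a.five_add_one_ne_sub_one

theorem ncard_neighborSet_union_le (hr : r ≤ m) {u v : ZMod 5 × ZMod m}
    (huv : (sparseBlowupC5 m r).Adj u v) :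
    ((sparseBlowupC5 m r).neighborSet u ∪ (sparseBlowupC5 m r).neighborSet v).ncard
      ≤ 2 * m + 2 * r := by
  have hbound {A : Set (ZMod 5 × ZMod m)} {a b c d : ZMod 5} {s t : Set (ZMod m)}
      (hs : s.ncard = r) (ht : t.ncard = r) (hA : A ⊆ {a, b} ×ˢ univ ∪ {c} ×ˢ s ∪ {d} ×ˢ t) :
      A.ncard ≤ 2 * m + 2 * r := by
    have := ncard_pair_prod_univ_union_le a b c d s t
    rw [hs, ht, Nat.card_zmod] at this
    exact (ncard_le_ncard hA).trans (by omega)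
  obtain ⟨a, x⟩ := u
  obtain ⟨b, y⟩ := v
  rcases huv with ⟨rfl, -⟩ | ⟨rfl, -⟩ | ⟨rfl, -⟩
  case' inl =>
    refine hbound (a := a) (b := a + 1) (c := a - 1) (d := a - 1)
      (ZMod.ncard_setOf_val_sub_lt' x hr) (ZMod.ncard_setOf_val_sub_lt' y hr) ?_
  case' inr.inl =>
    refine hbound (a := a) (b := a + 1) (c := a - 1) (d := a + 1 + 1)
      (ZMod.ncard_setOf_val_sub_lt' x hr) (ZMod.ncard_setOf_val_sub_lt y hr) ?_
  case' inr.inr =>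
    refine hbound (a := b + 1) (b := b) (c := b - 1) (d := b + 1 + 1)
      (ZMod.ncard_setOf_val_sub_lt' y hr) (ZMod.ncard_setOf_val_sub_lt x hr) ?_
  all_goals
    rw [neighborSet_eq, neighborSet_eq]
    rintro ⟨c, z⟩
    simp only [mem_union, mem_prod, mem_singleton_iff, mem_insert_iff, mem_compl_iff, mem_univ,
      mem_ofPred_eq, add_sub_cancel_right]
    tauto

theorem isDEGraph (hr : r ≤ m) {δ η : ℝ} (hδ : δ * (5 * m) ≤ m + 2 * r)
    (hη : 2 * m + 2 * r ≤ (1 - η) * (5 * m)) : IsDEGraph δ η (sparseBlowupC5 m r) := by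
  have hcard : Fintype.card (ZMod 5 × ZMod m) = 5 * m := by
    rw [Fintype.card_prod, ZMod.card, ZMod.card]
  refine ⟨?_, fun v => ?_, fun u v huv => ?_⟩
  · have := NeZero.one_le (n := m)
    omega
  · have hdeg : (((sparseBlowupC5 m r).neighborSet v).ncard : ℝ) + 1 = m + 2 * r := by
      exact_mod_cast ncard_neighborSet_add_one hr v
    rw [hcard, hdeg]
    push_cast
    linarith
  · rw [hcard]
    push_cast
    exact le_trans (mod_cast ncard_neighborSet_union_le hr huv) hη

end sparseBlowupC5

theorem c5_sparsified_valid (p : ℝ) (hp0 : 0 ≤ p) (hp1 : p ≤ 1) :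
    ∀ ε : ℝ, 0 < ε → ∃ (n : ℕ) (G : SimpleGraph (Fin n)),
      IsDEGraph ((1 + 2*p)/5 - ε) ((3 - 2*p)/5 - ε) G := by
  intro ε hε
  obtain ⟨m, hm⟩ := exists_nat_gt ε⁻¹
  have : NeZero m := ⟨by rintro rfl; exact (inv_pos.mpr hε).not_gt (by simpa using hm)⟩
  set r := ⌊p * m⌋₊
  have hpm : 0 ≤ p * m := by positivity
  have hr_le : (r : ℝ) ≤ p * m := Nat.floor_le hpm
  have hr_gt : p * m - 1 < r := by linarith [Nat.lt_floor_add_one (p * m)]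
  have hεm : 1 < ε * m := by rwa [inv_lt_iff_one_lt_mul₀' hε] at hm
  have hrm : r ≤ m := by
    have : p * m ≤ m := mul_le_of_le_one_left (Nat.cast_nonneg m) hp1
    exact_mod_cast hr_le.trans this
  refine ⟨_, _, (sparseBlowupC5.isDEGraph hrm ?_ ?_).of_iso (overFinIso _ rfl)⟩
  · -- the degree loses `2 (pm - r) < 2` to rounding, which `5εm > 5` absorbs
    nlinarith
  · nlinarith
end
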